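/- The top cycle rule on n ≥ 3 players is not 2-SNM-α for any α < 1 − 2/n. -/
import Mathlib


abbrev Tournament (n : ℕ) := Fin n → Fin n → Bool

def IsTournament {n : ℕ} (T : Tournament n) : Prop :=
  (∀ i, T i i = false) ∧ ∀ i j : Fin n, i ≠ j → T i j = !T j i

def CondorcetWinner {n : ℕ} (T : Tournament n) (i : Fin n) : Prop :=
  ∀ j, j ≠ i → T i j = true

def PairAdjacent {n : ℕ} (i j : Fin n) (T T' : Tournament n) : Prop :=
  ∀ a b : Fin n, ¬((a = i ∧ b = j) ∨ (a = j ∧ b = i)) → T a b = T' a b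

def SAdjacent {n : ℕ} (S : Finset (Fin n)) (T T' : Tournament n) : Prop :=
  ∀ a b : Fin n, (a ∉ S ∨ b ∉ S) → T a b = T' a b

def IsRule {n : ℕ} (r : Tournament n → Fin n → ℝ) : Prop :=
  ∀ T, IsTournament T → (∀ i, 0 ≤ r T i) ∧ (∑ i, r T i) = 1

def CondorcetConsistent {n : ℕ} (r : Tournament n → Fin n → ℝ) : Prop :=
  ∀ T, IsTournament T → ∀ i, CondorcetWinner T i → r T i = 1

def SNM2 {n : ℕ} (r : Tournament n → Fin n → ℝ) (α : ℝ) : Prop :=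
  ∀ T T' : Tournament n, IsTournament T → IsTournament T' →
    ∀ i j : Fin n, i ≠ j → PairAdjacent i j T T' →
      r T' i + r T' j - r T i - r T j ≤ α

def SNMk {n : ℕ} (k : ℕ) (r : Tournament n → Fin n → ℝ) (α : ℝ) : Prop :=
  ∀ S : Finset (Fin n), S.card ≤ k → ∀ T T' : Tournament n,
    IsTournament T → IsTournament T' → SAdjacent S T T' →
      (∑ i ∈ S, r T' i) - (∑ i ∈ S, r T i) ≤ α

def flipTo {n : ℕ} (i j : Fin n) (T : Tournament n) : Tournament n :=
  fun a b => if a = i ∧ b = j then true else if a = j ∧ b = i then false else T a b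

def winCount {n : ℕ} (T : Tournament n) (i : Fin n) : ℕ :=
  (Finset.univ.filter fun j => T i j = true).card

def cyclicT (m w : ℕ) : Tournament m :=
  fun i j => decide (1 ≤ (j.val + m - i.val) % m ∧ (j.val + m - i.val) % m ≤ w)

def skT (n : ℕ) : Tournament n :=
  fun i j =>
    if i.val = n - 1 ∧ j.val = 0 then true
    else if i.val = 0 ∧ j.val = n - 1 then false
    else decide (i.val < j.val)

def Dominant {n : ℕ} (T : Tournament n) (S : Finset (Fin n)) : Prop :=
  S.Nonempty ∧ ∀ i ∈ S, ∀ j ∉ S, T i j = true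

open Classical in
noncomputable def topCycle {n : ℕ} (T : Tournament n) : Finset (Fin n) :=
  Finset.univ.filter fun i => ∀ S : Finset (Fin n), Dominant T S → i ∈ S

open Classical in
noncomputable def topCycleRule (n : ℕ) : Tournament n → Fin n → ℝ :=
  fun T i => if i ∈ topCycle T then ((topCycle T).card : ℝ)⁻¹ else 0

def linT (n : ℕ) : Tournament n := fun i j => decide (i.val < j.val)

lemma linT_isTournament (n : ℕ) : IsTournament (linT n) := by
  constructor
  · intro i; simp [linT]
  · intro i j hij
    have : i.val ≠ j.val := fun h => hij (Fin.ext h)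
    simp only [linT, Bool.not_eq_true']
    rcases lt_or_gt_of_ne this with h | h <;> simp [h, not_lt_of_gt, le_of_lt]

lemma skT_isTournament (n : ℕ) (hn : 3 ≤ n) : IsTournament (skT n) := by
  constructor
  · intro i
    simp only [skT]
    split_ifs with a b <;> first | (exfalso; omega) | simp
  · intro i j hij
    have hne : i.val ≠ j.val := fun h => hij (Fin.ext h)
    simp only [skT]
    by_cases h1 : i.val = n - 1 ∧ j.val = 0
    · rw [if_pos h1, if_neg (show ¬(j.val = n-1 ∧ i.val = 0) by omega),
          if_pos (show j.val = 0 ∧ i.val = n-1 from ⟨h1.2, h1.1⟩)]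
      rfl
    · by_cases h2 : i.val = 0 ∧ j.val = n - 1
      · rw [if_neg h1, if_pos h2, if_pos (show j.val = n-1 ∧ i.val = 0 from ⟨h2.2, h2.1⟩)]
        rfl
      · rw [if_neg h1, if_neg h2,
            if_neg (show ¬(j.val = n-1 ∧ i.val = 0) from fun h => h2 ⟨h.2, h.1⟩),
            if_neg (show ¬(j.val = 0 ∧ i.val = n-1) from fun h => h1 ⟨h.2, h.1⟩)]
        rcases lt_or_gt_of_ne hne with h | h
        · simp [h, Nat.lt_asymm h]
        · simp [h, Nat.lt_asymm h]

lemma skT_dominant_all (n : ℕ) (hn : 3 ≤ n) (S : Finset (Fin n))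
    (hS : Dominant (skT n) S) : ∀ m : Fin n, m ∈ S := by
  have step : ∀ k ∈ S, ∀ j : Fin n, skT n k j = false → j ∈ S := by
    intro k hk j hkj
    by_contra hj
    have := hS.2 k hk j hj
    rw [hkj] at this; exact Bool.false_ne_true this
  have down : ∀ d : ℕ, ∀ k : Fin n, k ∈ S → ∀ j : Fin n,
      1 ≤ j.val → j.val ≤ k.val → k.val - j.val = d → j ∈ S := by
    intro d
    induction d with
    | zero =>
      intro k hk j h1 h2 h3
      have : j = k := Fin.ext (by omega)
      rwa [this]
    | succ d ih =>
      intro k hk j h1 h2 h3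
      have hk1 : k.val - 1 < n := by omega
      have hfalse : skT n k ⟨k.val - 1, hk1⟩ = false := by
        simp only [skT]
        split_ifs with a b <;>
          first | (exfalso; omega) | (simp only [decide_eq_false_iff_not]; omega)
      have hk'S : (⟨k.val - 1, hk1⟩ : Fin n) ∈ S := step k hk _ hfalse
      exact ih ⟨k.val - 1, hk1⟩ hk'S j h1 (show j.val ≤ k.val - 1 by omega)
        (show k.val - 1 - j.val = d by omega)
  obtain ⟨i₀, hi₀⟩ := hS.1
  have hz : (⟨0, by omega⟩ : Fin n) ∈ S := by
    by_cases h0 : i₀.val = 0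
    · have : (⟨0, by omega⟩ : Fin n) = i₀ := Fin.ext (by simp [h0])
      rwa [this]
    · have h1 : (⟨1, by omega⟩ : Fin n) ∈ S :=
        down (i₀.val - 1) i₀ hi₀ ⟨1, by omega⟩ (Nat.le_refl 1)
          (show 1 ≤ i₀.val by omega) rfl
      apply step _ h1
      simp only [skT]
      split_ifs with a b <;> first | (exfalso; omega) | simp
  have htop : (⟨n - 1, by omega⟩ : Fin n) ∈ S := by
    apply step _ hz
    simp only [skT]
    split_ifs with a b <;>
      first
        | (exfalso; omega)
        | rfl
        | exact absurd ⟨trivial, trivial⟩ b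
        | simp
  intro m
  by_cases hm : m.val = 0
  · have : m = (⟨0, by omega⟩ : Fin n) := Fin.ext hm
    rw [this]; exact hz
  · exact down (n - 1 - m.val) ⟨n - 1, by omega⟩ htop m (Nat.pos_of_ne_zero hm)
      (show m.val ≤ n - 1 by have := m.isLt; omega) rfl

lemma topCycle_skT (n : ℕ) (hn : 3 ≤ n) : topCycle (skT n) = Finset.univ := by
  apply Finset.eq_univ_iff_forall.mpr
  intro i
  simp only [topCycle, Finset.mem_filter, Finset.mem_univ, true_and]
  intro S hS
  exact skT_dominant_all n hn S hS i

lemma topCycle_linT (n : ℕ) (hn : 3 ≤ n) :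
    topCycle (linT n) = {(⟨0, by omega⟩ : Fin n)} := by
  apply Finset.Subset.antisymm
  · intro i hi
    simp only [topCycle, Finset.mem_filter, Finset.mem_univ, true_and] at hi
    apply hi
    constructor
    · exact ⟨_, Finset.mem_singleton_self _⟩
    · intro a ha j hj
      simp only [Finset.mem_singleton] at ha hj
      subst ha
      simp only [linT, decide_eq_true_iff]
      have : j.val ≠ 0 := fun h => hj (Fin.ext h)
      simpa using Nat.pos_of_ne_zero this
  · intro i hi
    simp only [Finset.mem_singleton] at hi
    subst hi
    simp only [topCycle, Finset.mem_filter, Finset.mem_univ, true_and]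
    intro S hS
    by_contra h0
    obtain ⟨a, ha⟩ := hS.1
    have := hS.2 a ha _ h0
    simp only [linT, decide_eq_true_iff] at this
    omega

/-- The top cycle rule on n ≥ 3 players is not 2-SNM-α for any α < 1 - 2/n. -/
theorem stmt_7 (n : ℕ) (hn : 3 ≤ n) (α : ℝ) (hsnm : SNM2 (topCycleRule n) α) :
    1 - 2/(n:ℝ) ≤ α := by
  have hz : (0:ℕ) < n := by omega
  set i : Fin n := ⟨0, by omega⟩ with hi
  set j : Fin n := ⟨n - 1, by omega⟩ with hj
  have hij : i ≠ j := by
    intro h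
    have := congrArg Fin.val h
    simp [hi, hj] at this; omega
  have hadj : PairAdjacent i j (skT n) (linT n) := by
    intro a b hab
    simp only [skT, linT]
    have c1 : ¬ (a.val = n - 1 ∧ b.val = 0) := by
      rintro ⟨h1, h2⟩
      exact hab (Or.inr ⟨Fin.ext (by simp [hj, h1]), Fin.ext (by simp [hi, h2])⟩)
    have c2 : ¬ (a.val = 0 ∧ b.val = n - 1) := by
      rintro ⟨h1, h2⟩
      exact hab (Or.inl ⟨Fin.ext (by simp [hi, h1]), Fin.ext (by simp [hj, h2])⟩)
    simp [c1, c2]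
  have key := hsnm (skT n) (linT n) (skT_isTournament n hn) (linT_isTournament n)
    i j hij hadj
  have hTC : topCycle (skT n) = Finset.univ := topCycle_skT n hn
  have hTC' : topCycle (linT n) = {i} := topCycle_linT n hn
  have hji : j ∉ topCycle (linT n) := by
    rw [hTC']; simp [Finset.mem_singleton]; exact fun h => hij h.symm
  have r1 : topCycleRule n (linT n) i = 1 := by
    simp [topCycleRule, hTC']
  have r2 : topCycleRule n (linT n) j = 0 := by
    simp [topCycleRule, hji]
  have r3 : topCycleRule n (skT n) i = (n:ℝ)⁻¹ := by
    simp [topCycleRule, hTC']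
    rw [hTC]; simp
  have r4 : topCycleRule n (skT n) j = (n:ℝ)⁻¹ := by
    simp [topCycleRule]
    rw [hTC]; simp
  rw [r1, r2, r3, r4] at key
  have hn' : (n:ℝ) ≠ 0 := by positivity
  calc 1 - 2/(n:ℝ) = 1 + 0 - (n:ℝ)⁻¹ - (n:ℝ)⁻¹ := by field_simp; ring
    _ ≤ α := key
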